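/- arXiv:math/0501099 — 2 statements merged into one kernel-verified Lean document; each statement's English description precedes it below -/
import Mathlib

section
/- Let (W,S) be a Coxeter system with reflections T and A ⊆ T. For each A-admissible subset I, the set D_I^A = {w ∈ W : D_A(w) = I} is left-connected: for any w, w' ∈ D_I^A, there is a sequence w = w₁, w₂, …, w_r = w' in D_I^A with w_{i+1} w_i⁻¹ ∈ S for all i. -/
/-!
Tits' construction: `W` acts on `W × {±1}` by letting a simple reflection `s` send `(t, ε)` to
`(s t s, -ε)` if `t = s` and to `(s t s, ε)` otherwise. Its sign component `η(w, t)` is a cocycle,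
`η(uv, t) = η(v, t) η(u, v t v⁻¹)`, and for a reflection `t` one has `η(w, t) = -1` exactly when
`ℓ(wt) < ℓ(w)`; hence `N(uv) = N(v) Δ v⁻¹ N(u) v` for the right inversion sets.

Now let `w ≠ w'` lie in one descent class and let `s` be a right descent of `w' w⁻¹`. Passing
from `w` to `s w` can only change whether `t` is a descent when `w t w⁻¹ = s`; but for that `t`
the inversion formula for `w' = (w' w⁻¹) w` says `t ∈ N(w) ↔ t ∉ N(w')`, which is impossible when
`t ∈ A`. So `s w` stays in the class, is one step closer to `w'`, and we induct on `ℓ(w' w⁻¹)`.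
-/

open Equiv Function Finset

section SignedConjugation

open scoped Classical

variable {G : Type*} [Group G]

noncomputable def reflSign (c t : G) : ℤˣ := if t = c then -1 else 1

lemma reflSign_conj (c g t : G) : reflSign c (g * t * g⁻¹) = reflSign (g⁻¹ * c * g) t := by
  have h : g * t * g⁻¹ = c ↔ t = g⁻¹ * c * g := by
    constructor <;> rintro rfl <;> group
  exact if_congr h rfl rfl

noncomputable def twistConj (c : G) (p : G × ℤˣ) : G × ℤˣ :=
  (c * p.1 * c⁻¹, p.2 * reflSign c p.1)

lemma twistConj_involutive {c : G} (hc : c * c = 1) : Involutive (twistConj c) := by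
  rintro ⟨t, ε⟩
  have hc' : c⁻¹ = c := inv_eq_of_mul_eq_one_right hc
  show (c * (c * t * c⁻¹) * c⁻¹, ε * reflSign c t * reflSign c (c * t * c⁻¹)) = (t, ε)
  rw [reflSign_conj, inv_mul_cancel, one_mul, mul_assoc ε, Int.units_mul_self, mul_one, hc']
  simp only [← mul_assoc, hc, one_mul]
  rw [mul_assoc, hc, mul_one]

noncomputable def twistConjPerm (c : G) (hc : c * c = 1) : Perm (G × ℤˣ) :=
  (twistConj_involutive hc).toPerm

lemma twistConjPerm_apply {c : G} (hc : c * c = 1) (t : G) (ε : ℤˣ) :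
    twistConjPerm c hc (t, ε) = (c * t * c⁻¹, ε * reflSign c t) := rfl

variable {a b : G} (ha : a * a = 1) (hb : b * b = 1)
include ha hb

lemma twistConjPerm_mul_pow_apply (k : ℕ) (t : G) (ε : ℤˣ) :
    ((twistConjPerm a ha * twistConjPerm b hb) ^ k) (t, ε) =
      ((a * b) ^ k * t * ((a * b) ^ k)⁻¹,
        ε * ∏ j ∈ range (2 * k), reflSign ((b * a) ^ j * b) t) := by
  have hab : (a * b)⁻¹ = b * a := by
    rw [mul_inv_rev, inv_eq_of_mul_eq_one_right ha, inv_eq_of_mul_eq_one_right hb]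
  have hshift (j : ℕ) : (a * b)⁻¹ * ((b * a) ^ j * b) * (a * b) = (b * a) ^ (j + 2) * b := by
    rw [hab, pow_succ, pow_succ']
    simp only [mul_assoc]
  induction k generalizing t ε with
  | zero => simp
  | succ k ih =>
    rw [pow_succ, Perm.mul_apply, Perm.mul_apply, twistConjPerm_apply, twistConjPerm_apply,
      show a * (b * t * b⁻¹) * a⁻¹ = a * b * t * (a * b)⁻¹ by group, ih]
    simp only [reflSign_conj, hshift, show 2 * (k + 1) = 2 * k + 1 + 1 by ring, prod_range_succ']
    rw [inv_eq_of_mul_eq_one_right hb]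
    refine Prod.ext (by rw [pow_succ]; group) ?_
    simp only [zero_add, pow_one, pow_zero, one_mul]
    ac_rfl

-- `j ↦ (b * a) ^ j * b` has period `m`, so every sign in the product occurs twice.
lemma twistConjPerm_mul_pow_eq_one {m : ℕ} (hm : (a * b) ^ m = 1) :
    (twistConjPerm a ha * twistConjPerm b hb) ^ m = 1 := by
  have hm' : (b * a) ^ m = 1 := by
    rw [← inv_eq_one, ← inv_pow, mul_inv_rev, inv_eq_of_mul_eq_one_right ha,
      inv_eq_of_mul_eq_one_right hb, hm]
  ext1 ⟨t, ε⟩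
  rw [twistConjPerm_mul_pow_apply, hm, two_mul, prod_range_add]
  simp only [pow_add, hm', one_mul, Int.units_mul_self, mul_one, inv_one, Perm.one_apply]

end SignedConjugation

namespace CoxeterSystem

variable {B W : Type*} [Group W] {M : CoxeterMatrix B} (cs : CoxeterSystem M W)

local prefix:100 "s" => cs.simple
local prefix:100 "π" => cs.wordProd
local prefix:100 "ℓ" => cs.length
local prefix:100 "ris" => cs.rightInvSeq

noncomputable def signedConj : W →* Perm (W × ℤˣ) :=
  cs.lift ⟨fun i => twistConjPerm (s i) (cs.simple_mul_simple_self i),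
    fun i i' => twistConjPerm_mul_pow_eq_one _ _ (cs.simple_mul_simple_pow i i')⟩

lemma signedConj_simple (i : B) :
    cs.signedConj (s i) = twistConjPerm (s i) (cs.simple_mul_simple_self i) :=
  cs.lift_apply_simple _ i

lemma signedConj_wordProd_apply (ω : List B) (t : W) (ε : ℤˣ) :
    cs.signedConj (π ω) (t, ε) =
      (π ω * t * (π ω)⁻¹, ε * ((ris ω).map (reflSign · t)).prod) := by
  induction ω with
  | nil => simp [wordProd]
  | cons i ω ih =>
    rw [cs.wordProd_cons, map_mul, Perm.mul_apply, ih, signedConj_simple, twistConjPerm_apply,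
      reflSign_conj]
    refine Prod.ext (by group) ?_
    simp only [rightInvSeq, List.map_cons, List.prod_cons]
    ac_rfl

noncomputable def reflectionSign (w t : W) : ℤˣ := (cs.signedConj w (t, 1)).2

lemma reflectionSign_wordProd (ω : List B) (t : W) :
    cs.reflectionSign (π ω) t = ((ris ω).map (reflSign · t)).prod := by
  simp [reflectionSign, signedConj_wordProd_apply]

lemma signedConj_apply (w t : W) (ε : ℤˣ) :
    cs.signedConj w (t, ε) = (w * t * w⁻¹, ε * cs.reflectionSign w t) := by
  obtain ⟨ω, rfl⟩ := cs.wordProd_surjective w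
  simp [reflectionSign, signedConj_wordProd_apply]

lemma reflectionSign_mul (u v t : W) :
    cs.reflectionSign (u * v) t = cs.reflectionSign v t * cs.reflectionSign u (v * t * v⁻¹) := by
  rw [reflectionSign, map_mul, Perm.mul_apply, signedConj_apply, signedConj_apply, one_mul]

lemma reflectionSign_one (t : W) : cs.reflectionSign 1 t = 1 := by
  simpa using cs.reflectionSign_wordProd [] t

lemma reflectionSign_simple (i : B) (t : W) : cs.reflectionSign (s i) t = reflSign (s i) t := by
  simpa using cs.reflectionSign_wordProd [i] t

lemma reflectionSign_self {t : W} (ht : cs.IsReflection t) : cs.reflectionSign t t = -1 := by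
  obtain ⟨w, i, rfl⟩ := ht
  have h1 := cs.reflectionSign_mul (w * s i) w⁻¹ (w * s i * w⁻¹)
  have h2 := cs.reflectionSign_mul w (s i) (s i)
  have h3 := cs.reflectionSign_mul w w⁻¹ (w * s i * w⁻¹)
  rw [show w⁻¹ * (w * s i * w⁻¹) * w⁻¹⁻¹ = s i by group] at h1 h3
  rw [mul_inv_cancel, reflectionSign_one] at h3
  rw [show s i * s i * (s i)⁻¹ = s i by group, reflectionSign_simple, reflSign, if_pos rfl] at h2
  rw [h1, h2, mul_left_comm, ← h3, mul_one]

lemma length_mul_lt_of_reflectionSign_eq_neg_one {w t : W} (h : cs.reflectionSign w t = -1) :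
    ℓ (w * t) < ℓ w := by
  obtain ⟨ω, hω, rfl⟩ := cs.exists_isReduced w
  have hmem : t ∈ ris ω := by
    by_contra hnot
    rw [reflectionSign_wordProd, List.prod_eq_one] at h
    · exact absurd h (by decide)
    · simp only [List.mem_map]
      rintro _ ⟨r, hr, rfl⟩
      exact if_neg (ne_of_mem_of_not_mem hr hnot).symm
  exact (cs.isRightInversion_of_mem_rightInvSeq hω hmem).2

lemma isRightInversion_iff_reflectionSign {w t : W} (ht : cs.IsReflection t) :
    cs.IsRightInversion w t ↔ cs.reflectionSign w t = -1 := by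
  refine ⟨fun hlt => ?_, fun h => ⟨ht, cs.length_mul_lt_of_reflectionSign_eq_neg_one h⟩⟩
  refine (Int.units_eq_one_or _).resolve_left fun h1 => ?_
  have hwt : cs.reflectionSign (w * t) t = -1 := by
    rw [reflectionSign_mul, reflectionSign_self cs ht, mul_inv_cancel_right, h1, mul_one]
  have := cs.length_mul_lt_of_reflectionSign_eq_neg_one hwt
  rw [mul_assoc, ht.mul_self, mul_one] at this
  exact lt_asymm this hlt.2

lemma isRightInversion_mul_iff {t : W} (ht : cs.IsReflection t) (u v : W) :
    cs.IsRightInversion (u * v) t ↔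
      (cs.IsRightInversion v t ↔ ¬ cs.IsRightInversion u (v * t * v⁻¹)) := by
  rw [isRightInversion_iff_reflectionSign cs ht, isRightInversion_iff_reflectionSign cs ht,
    isRightInversion_iff_reflectionSign cs (ht.conj v), reflectionSign_mul]
  rcases Int.units_eq_one_or (cs.reflectionSign v t) with h | h <;>
    rcases Int.units_eq_one_or (cs.reflectionSign u (v * t * v⁻¹)) with h' | h' <;>
    simp [h, h']

lemma isRightInversion_simple_iff (i : B) {t : W} : cs.IsRightInversion (s i) t ↔ t = s i := by
  constructor
  · intro h
    rw [isRightInversion_iff_reflectionSign cs h.1, reflectionSign_simple, reflSign] at h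
    by_contra hne
    simp [hne] at h
  · rintro rfl
    simp [IsRightDescent]

def descentsIn (A : Set W) (w : W) : Set W := {t ∈ A | ℓ (w * t) < ℓ w}

lemma descentsIn_simple_mul {A : Set W} (hA : ∀ t ∈ A, cs.IsReflection t) {w w' : W}
    (h : cs.descentsIn A w = cs.descentsIn A w') {i : B} (hi : cs.IsRightDescent (w' * w⁻¹) i) :
    cs.descentsIn A (s i * w) = cs.descentsIn A w := by
  have hD {x t : W} (ht : cs.IsReflection t) :
      (ℓ (x * t) < ℓ x) ↔ cs.IsRightInversion x t := (and_iff_right ht).symm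
  ext t
  simp only [descentsIn, Set.mem_ofPred_eq]
  refine and_congr_right fun htA => ?_
  have ht := hA t htA
  have hww' : cs.IsRightInversion w t ↔ cs.IsRightInversion w' t := by
    simpa only [descentsIn, Set.mem_ofPred_eq, htA, true_and, hD ht] using Set.ext_iff.mp h t
  have hconj : w * t * w⁻¹ ≠ s i := by
    intro hconj
    have h' := cs.isRightInversion_mul_iff ht (w' * w⁻¹) w
    rw [inv_mul_cancel_right, hconj, isRightInversion_simple_iff_isRightDescent] at h'
    tauto
  rw [hD ht, hD ht, cs.isRightInversion_mul_iff ht, isRightInversion_simple_iff]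
  tauto

end CoxeterSystem

theorem descent_class_left_connected_general {B W : Type*} [Group W] {M : CoxeterMatrix B}
    (cs : CoxeterSystem M W) (A : Set W) (hA : ∀ t ∈ A, cs.IsReflection t)
    (I : Set W)
    (w w' : W)
    (hw : {t ∈ A | cs.length (w * t) < cs.length w} = I)
    (hw' : {t ∈ A | cs.length (w' * t) < cs.length w'} = I) :
    Relation.ReflTransGen
      (fun u v : W => v * u⁻¹ ∈ Set.range cs.simple ∧
        {t ∈ A | cs.length (v * t) < cs.length v} = I) w w' := by
  induction hn : cs.length (w' * w⁻¹) using Nat.strong_induction_on generalizing w with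
  | _ n ih =>
    obtain rfl | hne := eq_or_ne w w'
    · exact .refl
    obtain ⟨i, hi⟩ := cs.exists_rightDescent_of_ne_one (mul_inv_eq_one.not.mpr hne.symm)
    have hstep : cs.descentsIn A (cs.simple i * w) = I :=
      (cs.descentsIn_simple_mul hA (hw.trans hw'.symm) hi).trans hw
    refine .head ⟨⟨i, by group⟩, hstep⟩ (ih _ ?_ _ hstep rfl)
    rw [← hn, mul_inv_rev, cs.inv_simple, ← mul_assoc]
    exact hi

/-- Each descent class `D_I^A = {w : D_A(w) = I}` is left-connected:
any two of its elements are joined by a chain inside the class whose consecutive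
left quotients are simple reflections. -/
theorem descent_class_left_connected {B W : Type*} [Group W] {M : CoxeterMatrix B}
    (cs : CoxeterSystem M W) (A : Set W) (hA : ∀ t ∈ A, cs.IsReflection t)
    (I : Set W) (hI : ∃ w : W, {t ∈ A | cs.length (w * t) < cs.length w} = I)
    (w w' : W)
    (hw : {t ∈ A | cs.length (w * t) < cs.length w} = I)
    (hw' : {t ∈ A | cs.length (w' * t) < cs.length w'} = I) :
    Relation.ReflTransGen
      (fun u v : W => v * u⁻¹ ∈ Set.range cs.simple ∧
        {t ∈ A | cs.length (v * t) < cs.length v} = I) w w' :=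
  descent_class_left_connected_general cs A hA I w w' hw hw'
end

section
/- Let W be a finite Coxeter group with reflections T and A ⊆ T nice. For I, J A-admissible, w ∈ W and s ∈ S with w ⌣_A sw (i.e., w⁻¹sw ∉ A), the bijection ψ_s^A on W × W (defined by ψ_s^A(u,v) = (su,v) if u⁻¹su ∉ A, and (u, u⁻¹su·v) otherwise) maps {(u,v) ∈ D_I^A × D_J^A : uv = w} bijectively onto {(u,v) ∈ D_I^A × D_J^A : uv = sw}. -/
/-!
`ψ` turns a factorization `w = uv` into one of `sw`, either as `(su)v` or as `u(u⁻¹su)v`, and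
is an involution, so it suffices that it preserves the descent sets of both factors. When
`u⁻¹su ∈ A`, niceness applied to the reflection `u⁻¹su` and to `v` (for which
`v⁻¹(u⁻¹su)v = w⁻¹sw ∉ A`) gives `D_A(u⁻¹suv) = D_A(v)`. When `u⁻¹su ∉ A` we need
`D_A(su) = D_A(u)`: left multiplication by `s` changes the right inversion set of `u` only at
`u⁻¹su`. This is read off the signed permutation representation of `W` on `W × {±1}`
(Björner–Brenti, Thm. 1.4.3), `w • (t, ε) = (wtw⁻¹, η(w,t) ε)`, whose sign `η(w,t)` is `-1`
exactly at the right inversions `t` of `w`.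
-/

section SignedConj

variable {G : Type*} [Group G]

open scoped Classical in
noncomputable def eqSign (r t : G) : ℤˣ := if t = r then -1 else 1

lemma eqSign_conj (r g t : G) : eqSign r (g * t * g⁻¹) = eqSign (g⁻¹ * r * g) t := by
  have : g * t * g⁻¹ = r ↔ t = g⁻¹ * r * g := by
    constructor <;> rintro rfl <;> group
  by_cases h : t = g⁻¹ * r * g
  · rw [eqSign, eqSign, if_pos (this.mpr h), if_pos h]
  · rw [eqSign, eqSign, if_neg (mt this.mp h), if_neg h]

noncomputable def signedConjPerm (a : G) : Equiv.Perm (G × ℤˣ) :=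
  Equiv.prodShear (MulAut.conj a).toEquiv fun t => Equiv.mulLeft (eqSign a t)

lemma signedConjPerm_apply (a t : G) (ε : ℤˣ) :
    signedConjPerm a (t, ε) = (a * t * a⁻¹, eqSign a t * ε) := rfl

variable {a b : G}

lemma signedConjPerm_mul_pow_apply (ha : a * a = 1) (hb : b * b = 1) (n : ℕ) (t : G) (ε : ℤˣ) :
    ((signedConjPerm a * signedConjPerm b) ^ n) (t, ε) =
      ((a * b) ^ n * t * ((a * b) ^ n)⁻¹,
        (∏ k ∈ Finset.range (2 * n), eqSign (b * (a * b) ^ k) t) * ε) := by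
  have ha' : a⁻¹ = a := inv_eq_of_mul_eq_one_right ha
  have hb' : b⁻¹ = b := inv_eq_of_mul_eq_one_right hb
  have hab : (a * b)⁻¹ * b = b * (a * b) := by rw [mul_inv_rev, ha', hb', mul_assoc]
  have hstep (t : G) (ε : ℤˣ) : (signedConjPerm a * signedConjPerm b) (t, ε) =
      ((a * b) * t * (a * b)⁻¹, eqSign (b * (a * b) ^ 1) t * eqSign (b * (a * b) ^ 0) t * ε) := by
    rw [Equiv.Perm.mul_apply, signedConjPerm_apply, signedConjPerm_apply, eqSign_conj]
    ext <;> simp [ha', hb', mul_assoc]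
  induction n generalizing t ε with
  | zero => simp
  | succ n ih =>
    have hconj (k : ℕ) : (a * b)⁻¹ * (b * (a * b) ^ k) * (a * b) = b * (a * b) ^ (k + 1 + 1) :=
      calc (a * b)⁻¹ * (b * (a * b) ^ k) * (a * b) = (a * b)⁻¹ * b * (a * b) ^ k * (a * b) := by
            simp only [mul_assoc]
        _ = b * (a * b) ^ (k + 1 + 1) := by
            rw [hab, pow_succ, pow_succ']; simp only [mul_assoc]
    rw [pow_succ, Equiv.Perm.mul_apply, hstep, ih, Prod.mk.injEq]
    constructor
    · simp only [pow_succ, mul_inv_rev, mul_assoc]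
    · simp only [eqSign_conj, hconj]
      rw [Nat.mul_succ, Finset.prod_range_succ', Finset.prod_range_succ', zero_add, mul_assoc,
        mul_assoc, mul_assoc]

-- Since `(ab)^m = 1`, each `b (ab)^k` with `k < 2m` occurs an even number of times in the sign.
lemma signedConjPerm_mul_pow_eq_one (ha : a * a = 1) (hb : b * b = 1) {m : ℕ}
    (hm : (a * b) ^ m = 1) : (signedConjPerm a * signedConjPerm b) ^ m = 1 := by
  ext ⟨t, ε⟩ <;>
    simp [signedConjPerm_mul_pow_apply ha hb, hm, two_mul, Finset.prod_range_add, pow_add]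

end SignedConj

section Psi

variable {G : Type*} [Group G]

open scoped Classical in
noncomputable def psi (A : Set G) (s : G) (p : G × G) : G × G :=
  if p.1⁻¹ * s * p.1 ∉ A then (s * p.1, p.2) else (p.1, p.1⁻¹ * s * p.1 * p.2)

lemma psi_of_mem {A : Set G} {s : G} {p : G × G} (h : p.1⁻¹ * s * p.1 ∈ A) :
    psi A s p = (p.1, p.1⁻¹ * s * p.1 * p.2) :=
  if_neg (not_not.mpr h)

lemma psi_of_notMem {A : Set G} {s : G} {p : G × G} (h : p.1⁻¹ * s * p.1 ∉ A) :
    psi A s p = (s * p.1, p.2) := if_pos h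

lemma psi_involutive (A : Set G) {s : G} (hs : s * s = 1) : Function.Involutive (psi A s) := by
  rintro ⟨u, v⟩
  by_cases hu : u⁻¹ * s * u ∈ A
  · rw [psi_of_mem (p := (u, v)) hu, psi_of_mem (p := (u, _)) hu]
    simp only [mul_assoc, mul_inv_cancel_left, ← mul_assoc s s, hs, one_mul, inv_mul_cancel_left]
  · have hsu : (s * u)⁻¹ * s * (s * u) = u⁻¹ * s * u := by
      rw [mul_inv_rev, inv_eq_of_mul_eq_one_right hs]
      simp only [mul_assoc, hs, one_mul]
    rw [psi_of_notMem (p := (u, v)) hu, psi_of_notMem (p := (s * u, v)) (hsu ▸ hu), ← mul_assoc,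
      hs, one_mul]

lemma fst_mul_snd_psi (A : Set G) (s : G) (p : G × G) :
    (psi A s p).1 * (psi A s p).2 = s * (p.1 * p.2) := by
  unfold psi
  split_ifs <;> group

end Psi

namespace CoxeterSystem

variable {B W : Type*} [Group W] {M : CoxeterMatrix B} (cs : CoxeterSystem M W)

noncomputable def reflectionRep : W →* Equiv.Perm (W × ℤˣ) :=
  cs.lift ⟨fun i => signedConjPerm (cs.simple i), fun i i' =>
    signedConjPerm_mul_pow_eq_one (cs.simple_mul_simple_self i) (cs.simple_mul_simple_self i')
      (cs.simple_mul_simple_pow i i')⟩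

noncomputable def inversionSign (w t : W) : ℤˣ := (cs.reflectionRep w (t, 1)).2

lemma reflectionRep_simple (i : B) :
    cs.reflectionRep (cs.simple i) = signedConjPerm (cs.simple i) :=
  cs.lift_apply_simple _ i

lemma reflectionRep_apply (w t : W) (ε : ℤˣ) :
    cs.reflectionRep w (t, ε) = (w * t * w⁻¹, cs.inversionSign w t * ε) := by
  induction w using cs.simple_induction_left generalizing t ε with
  | one => simp [inversionSign]
  | mul_simple_left w i ih =>
    have h (ε : ℤˣ) : cs.reflectionRep (cs.simple i * w) (t, ε) =
        (cs.simple i * (w * t * w⁻¹) * (cs.simple i)⁻¹,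
          eqSign (cs.simple i) (w * t * w⁻¹) * (cs.inversionSign w t * ε)) := by
      rw [map_mul, Equiv.Perm.mul_apply, ih, reflectionRep_simple, signedConjPerm_apply]
    rw [inversionSign, h, h]
    simp only [mul_inv_rev, mul_assoc, mul_one]

lemma inversionSign_mul (w v t : W) :
    cs.inversionSign (w * v) t = cs.inversionSign w (v * t * v⁻¹) * cs.inversionSign v t := by
  show (cs.reflectionRep (w * v) (t, 1)).2 = _
  rw [map_mul, Equiv.Perm.mul_apply, reflectionRep_apply, reflectionRep_apply, mul_one]

@[simp]
lemma inversionSign_one (t : W) : cs.inversionSign 1 t = 1 := by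
  simp [inversionSign]

lemma inversionSign_simple (i : B) (t : W) :
    cs.inversionSign (cs.simple i) t = eqSign (cs.simple i) t := by
  simp [inversionSign, reflectionRep_simple, signedConjPerm_apply]

lemma mem_rightInvSeq_of_inversionSign_ne_one (ω : List B) {t : W}
    (h : cs.inversionSign (cs.wordProd ω) t ≠ 1) : t ∈ cs.rightInvSeq ω := by
  induction ω with
  | nil => simp at h
  | cons i ω ih =>
    rw [wordProd_cons, inversionSign_mul, inversionSign_simple] at h
    rw [rightInvSeq, List.mem_cons]
    by_cases hi : cs.wordProd ω * t * (cs.wordProd ω)⁻¹ = cs.simple i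
    · left
      rw [← hi]; group
    · right
      rw [eqSign, if_neg hi, one_mul] at h
      exact ih h

lemma inversionSign_self {t : W} (ht : cs.IsReflection t) : cs.inversionSign t t = -1 := by
  obtain ⟨w, i, rfl⟩ := ht
  have hconj : w⁻¹ * (w * cs.simple i * w⁻¹) * w⁻¹⁻¹ = cs.simple i := by group
  have hcancel := cs.inversionSign_mul w w⁻¹ (w * cs.simple i * w⁻¹)
  rw [mul_inv_cancel, inversionSign_one, hconj] at hcancel
  rw [inversionSign_mul, hconj, inversionSign_mul, mul_inv_cancel_right, inversionSign_simple,
    eqSign, if_pos rfl, mul_neg_one, neg_mul, ← hcancel]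

lemma inversionSign_mul_of_isReflection (w : W) {t : W} (ht : cs.IsReflection t) :
    cs.inversionSign (w * t) t = -cs.inversionSign w t := by
  rw [inversionSign_mul, ht.inv, ht.mul_self, one_mul, inversionSign_self cs ht, mul_neg_one]

lemma inversionSign_ne_one_iff (w t : W) :
    cs.inversionSign w t ≠ 1 ↔ cs.IsRightInversion w t := by
  have forward (w : W) (h : cs.inversionSign w t ≠ 1) : cs.IsRightInversion w t := by
    obtain ⟨ω, hω, rfl⟩ := cs.exists_isReduced w
    exact cs.isRightInversion_of_mem_rightInvSeq hω
      (cs.mem_rightInvSeq_of_inversionSign_ne_one ω h)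
  refine ⟨forward w, fun ⟨ht, hlt⟩ h => ?_⟩
  have := (forward (w * t) (by rw [inversionSign_mul_of_isReflection cs w ht, h]; decide)).2
  rw [mul_assoc, ht.mul_self, mul_one] at this
  omega

lemma isRightInversion_simple_mul_iff {i : B} {u t : W} (h : u⁻¹ * cs.simple i * u ≠ t) :
    cs.IsRightInversion (cs.simple i * u) t ↔ cs.IsRightInversion u t := by
  rw [← inversionSign_ne_one_iff, ← inversionSign_ne_one_iff, inversionSign_mul,
    inversionSign_simple, eqSign_conj, eqSign, if_neg h.symm, one_mul]

def descentSet (A : Set W) (w : W) : Set W := {t ∈ A | cs.length (w * t) < cs.length w}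

lemma descentSet_simple_mul {A : Set W} (hA : ∀ t ∈ A, cs.IsReflection t) {i : B} {u : W}
    (hu : u⁻¹ * cs.simple i * u ∉ A) : cs.descentSet A (cs.simple i * u) = cs.descentSet A u := by
  ext t
  refine and_congr_right fun htA => ?_
  have := cs.isRightInversion_simple_mul_iff (i := i) (ne_of_mem_of_not_mem htA hu).symm
  simpa only [IsRightInversion, hA t htA, true_and] using this

def descentFiber (A I J : Set W) (w : W) : Set (W × W) :=
  {p | cs.descentSet A p.1 = I ∧ cs.descentSet A p.2 = J ∧ p.1 * p.2 = w}

lemma mapsTo_psi_descentFiber {A : Set W} (hA : ∀ t ∈ A, cs.IsReflection t)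
    (hnice : ∀ r ∈ A, ∀ w : W, w⁻¹ * r * w ∉ A → cs.descentSet A (r * w) = cs.descentSet A w)
    (I J : Set W) {i : B} {w : W} (hw : w⁻¹ * cs.simple i * w ∉ A) :
    Set.MapsTo (psi A (cs.simple i)) (cs.descentFiber A I J w)
      (cs.descentFiber A I J (cs.simple i * w)) := by
  rintro ⟨u, v⟩ ⟨hu, hv, rfl⟩
  refine ⟨?_, ?_, fst_mul_snd_psi A _ _⟩ <;> by_cases hc : u⁻¹ * cs.simple i * u ∈ A
  · rwa [psi_of_mem hc]
  · rwa [psi_of_notMem hc, cs.descentSet_simple_mul hA hc]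
  · rwa [psi_of_mem hc, hnice _ hc v (by simpa [mul_assoc] using hw)]
  · rwa [psi_of_notMem hc]

end CoxeterSystem

open scoped Classical in
theorem psi_bijection_general {B W : Type*} [Group W] {M : CoxeterMatrix B}
    (cs : CoxeterSystem M W) (A : Set W) (hA : ∀ t ∈ A, cs.IsReflection t)
    (hnice : ∀ r ∈ A, ∀ w : W, w⁻¹ * r * w ∉ A →
      {t ∈ A | cs.length (r * w * t) < cs.length (r * w)} =
        {t ∈ A | cs.length (w * t) < cs.length w})
    (I J : Set W)
    (i : B) (w : W) (hw : w⁻¹ * cs.simple i * w ∉ A) :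
    Set.BijOn
      (fun p : W × W =>
        if p.1⁻¹ * cs.simple i * p.1 ∉ A then (cs.simple i * p.1, p.2)
        else (p.1, p.1⁻¹ * cs.simple i * p.1 * p.2))
      {p : W × W | {t ∈ A | cs.length (p.1 * t) < cs.length p.1} = I ∧
        {t ∈ A | cs.length (p.2 * t) < cs.length p.2} = J ∧ p.1 * p.2 = w}
      {p : W × W | {t ∈ A | cs.length (p.1 * t) < cs.length p.1} = I ∧
        {t ∈ A | cs.length (p.2 * t) < cs.length p.2} = J ∧
        p.1 * p.2 = cs.simple i * w} := by
  have hinv := psi_involutive A (cs.simple_mul_simple_self i)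
  have hsw : (cs.simple i * w)⁻¹ * cs.simple i * (cs.simple i * w) ∉ A := by
    simpa [mul_assoc] using hw
  have hback := cs.mapsTo_psi_descentFiber hA hnice I J hsw
  rw [cs.simple_mul_simple_cancel_left] at hback
  exact Set.InvOn.bijOn ⟨fun p _ => hinv p, fun p _ => hinv p⟩
    (cs.mapsTo_psi_descentFiber hA hnice I J hw) hback

open scoped Classical in
/-- For `A` nice, `I, J` `A`-admissible, `s` simple and `w` with
`w⁻¹ s w ∉ A`, the involution `ψ_s^A` maps `{(u,v) ∈ D_I^A × D_J^A : uv = w}`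
bijectively onto `{(u,v) ∈ D_I^A × D_J^A : uv = sw}`. -/
theorem psi_bijection {B W : Type*} [Group W] [Finite W] {M : CoxeterMatrix B}
    (cs : CoxeterSystem M W) (A : Set W) (hA : ∀ t ∈ A, cs.IsReflection t)
    (hnice : ∀ r ∈ A, ∀ w : W, w⁻¹ * r * w ∉ A →
      {t ∈ A | cs.length (r * w * t) < cs.length (r * w)} =
        {t ∈ A | cs.length (w * t) < cs.length w})
    (I J : Set W)
    (hI : ∃ u : W, {t ∈ A | cs.length (u * t) < cs.length u} = I)
    (hJ : ∃ u : W, {t ∈ A | cs.length (u * t) < cs.length u} = J)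
    (i : B) (w : W) (hw : w⁻¹ * cs.simple i * w ∉ A) :
    Set.BijOn
      (fun p : W × W =>
        if p.1⁻¹ * cs.simple i * p.1 ∉ A then (cs.simple i * p.1, p.2)
        else (p.1, p.1⁻¹ * cs.simple i * p.1 * p.2))
      {p : W × W | {t ∈ A | cs.length (p.1 * t) < cs.length p.1} = I ∧
        {t ∈ A | cs.length (p.2 * t) < cs.length p.2} = J ∧ p.1 * p.2 = w}
      {p : W × W | {t ∈ A | cs.length (p.1 * t) < cs.length p.1} = I ∧
        {t ∈ A | cs.length (p.2 * t) < cs.length p.2} = J ∧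
        p.1 * p.2 = cs.simple i * w} :=
  psi_bijection_general cs A hA hnice I J i w hw
end
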